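/- arXiv:1509.01483 — 3 statements merged into one kernel-verified Lean document; each statement's English description precedes it below -/
import Mathlib

section
/- Fix a production network A on the set of firms M = {1,…,m} in which every firm has a nonempty set of suppliers S_i, and fix parameters α ∈ (0,1), θ ∈ (0,1), λ ∈ [0,1), τ_p ∈ (0,1], τ_w ∈ (0,1]. Suppose (w, q, p, (α_{i,j})) is a steady state of the out-of-equilibrium dynamics with all wealths w_i, outputs q_i and prices p_i strictly positive, i.e. for every firm i ∈ M: (a) p_i q_i = Σ_{j∈N} α_{i,j} w_j (each price equals its market-clearing value); (b) q_i = f_i(α_{0,i} w_i / p_0, (α_{j,i} w_i / p_j)_{j∈S_i}) (output equals production from purchased inputs); (c) w_i = (1−λ) p_i q_i (expenses equal (1−λ) times revenues); (d) the household's wealth satisfies w_0 = p_0 + λ Σ_{i∈M} p_i q_i and the labor market clears, p_0 = Σ_{j∈N} α_{0,j} w_j; (e) the household's spending shares are the Cobb-Douglas shares, α_{i,0} = α_{0,i}; and (f) for each firm i, the vector of shares (α_{0,i}, (α_{j,i})_{j∈S_i}) maximizes f_i(a_0/p_0, (a_j/p_j)_{j∈S_i}) over nonnegative shares with a_0 +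 Σ_{j∈S_i} a_j = 1. Then, defining commodity flows x_{i,j} := α_{i,j} w_j / p_i (the quantity of good i bought by agent j), the triple (p, q, x) is a general equilibrium with monopolistic mark-up λ of the economy E(A): (1) markets clear, q_i = Σ_{j∈N} x_{i,j} for every i ∈ M; (2) the household's consumption bundle (x_{i,0})_{i∈M} maximizes the Cobb-Douglas utility Π_{i∈M} x_i^{α_{0,i}} subject to the budget constraint Σ_{i∈M} p_i x_i ≤ w_0; (3) for every firm i, the input bundle (x_{0,i}, (x_{j,i})_{j∈S_i}) minimizes input cost p_0 x_0 + Σ_{j∈S_i} p_j x_j among all bundles producing at least q_i; and (4) prices are a mark-up over unit production cost, p_i = (1 + λ/(1−λ)) · (p_0 x_{0,i} + Σ_{j∈S_i} p_j x_{j,i}) / q_i. Moreover, when λ = 0, each firm's plan (q_i, x_{·,i}) also maximizes profit p_i q − p_0 x_0 − Σ_{j∈S_i} p_j x_j over all feasible production plans, so the steady state is a competitive equilibrium. -/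
/-
The CES production function `F` is homogeneous of degree one, so `F (a / p)` is the output bought
by one unit of money spent according to the shares `a`. Any bundle `z` of cost `c > 0` is `c` times
the bundle bought with one unit of money spent according to the shares `p j * z j / c`; hence if
the steady-state shares maximize output per unit of money, no bundle yields more than
`F (a / p)` times its cost. This is cost minimization, and with zero mark-up the price equals this
unit cost, so every plan has nonpositive profit while the steady state makes none.
For the household, weighted AM-GM shows that the Cobb-Douglas demands `β i * W / p i` maximize
utility on the budget set.
-/

open Finset

section Firm

variable {ι : Type*} (o : ι) (S : Finset ι)

noncomputable def ces (α θ : ℝ) (x : ι → ℝ) : ℝ :=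
  x o ^ α * (∑ j ∈ S, x j ^ θ) ^ ((1 - α) / θ)

def inputCost (p z : ι → ℝ) : ℝ :=
  p o * z o + ∑ j ∈ S, p j * z j

variable {o S}

theorem ces_mul_left {α θ t : ℝ} (hθ : θ ≠ 0) (ht : 0 < t) {x : ι → ℝ}
    (hx : ∀ j, 0 ≤ x j) :
    ces o S α θ (fun j => t * x j) = t * ces o S α θ x := by
  have hsum : ∑ j ∈ S, (t * x j) ^ θ = t ^ θ * ∑ j ∈ S, x j ^ θ := by
    rw [mul_sum]
    exact sum_congr rfl fun j _ => Real.mul_rpow ht.le (hx j)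
  have hpow : (t ^ θ) ^ ((1 - α) / θ) = t ^ (1 - α) := by
    rw [← Real.rpow_mul ht.le, mul_div_cancel₀ _ hθ]
  have hsplit : t ^ α * t ^ (1 - α) = t := by
    rw [← Real.rpow_add ht, add_sub_cancel, Real.rpow_one]
  unfold ces
  rw [hsum, Real.mul_rpow ht.le (hx o),
    Real.mul_rpow (Real.rpow_nonneg ht.le θ) (sum_nonneg fun j _ => Real.rpow_nonneg (hx j) θ),
    hpow]
  linear_combination (x o ^ α * (∑ j ∈ S, x j ^ θ) ^ ((1 - α) / θ)) * hsplit

theorem ces_eq_zero {α θ : ℝ} (hα : α ≠ 0) {x : ι → ℝ} (hx : x o = 0) :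
    ces o S α θ x = 0 := by
  rw [ces, hx, Real.zero_rpow hα, zero_mul]

theorem inputCost_nonneg {p z : ι → ℝ} (hp : ∀ j, 0 ≤ p j) (hz : ∀ j, 0 ≤ z j) :
    0 ≤ inputCost o S p z :=
  add_nonneg (mul_nonneg (hp o) (hz o)) (sum_nonneg fun j _ => mul_nonneg (hp j) (hz j))

theorem eq_zero_of_inputCost_eq_zero {p z : ι → ℝ} (hp : ∀ j, 0 < p j) (hz : ∀ j, 0 ≤ z j)
    (hc : inputCost o S p z = 0) : z o = 0 := by
  have hS : 0 ≤ ∑ j ∈ S, p j * z j := sum_nonneg fun j _ => mul_nonneg (hp j).le (hz j)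
  have ho : p o * z o = 0 := by
    rw [inputCost] at hc
    linarith [mul_nonneg (hp o).le (hz o)]
  exact (mul_eq_zero.1 ho).resolve_left (hp o).ne'

theorem inputCost_div {p a : ι → ℝ} (hp : ∀ j, p j ≠ 0) (w : ℝ) :
    inputCost o S p (fun j => a j * w / p j) = (a o + ∑ j ∈ S, a j) * w := by
  simp only [inputCost, mul_div_cancel₀ _ (hp _), add_mul, sum_mul]

theorem div_inputCost_add_sum_eq_one {p z : ι → ℝ} (hc : inputCost o S p z ≠ 0) :
    p o * z o / inputCost o S p z + ∑ j ∈ S, p j * z j / inputCost o S p z = 1 := by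
  rw [← sum_div, ← add_div]
  exact div_self hc

theorem le_mul_inputCost_of_optimal_shares {F : (ι → ℝ) → ℝ}
    (hF : ∀ t > 0, ∀ x : ι → ℝ, (∀ j, 0 ≤ x j) → F (fun j => t * x j) = t * F x)
    (hF₀ : ∀ x : ι → ℝ, x o = 0 → F x = 0) {p a : ι → ℝ} (hp : ∀ j, 0 < p j)
    (ha : ∀ b : ι → ℝ, (∀ j, 0 ≤ b j) → b o + ∑ j ∈ S, b j = 1 →
      F (fun j => b j / p j) ≤ F (fun j => a j / p j))
    {z : ι → ℝ} (hz : ∀ j, 0 ≤ z j) :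
    F z ≤ F (fun j => a j / p j) * inputCost o S p z := by
  set c := inputCost o S p z
  have hc₀ : 0 ≤ c := inputCost_nonneg (fun j => (hp j).le) hz
  rcases hc₀.eq_or_lt with hc | hc
  · rw [hF₀ z (eq_zero_of_inputCost_eq_zero hp hz hc.symm), ← hc, mul_zero]
  · have hopt := ha (fun j => p j * z j / c)
      (fun j => div_nonneg (mul_nonneg (hp j).le (hz j)) hc.le)
      (div_inputCost_add_sum_eq_one hc.ne')
    have hscaled : (fun j => p j * z j / c / p j) = fun j => c⁻¹ * z j := by
      funext j
      field_simp [(hp j).ne']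
    rwa [hscaled, hF c⁻¹ (inv_pos.2 hc) z hz, inv_mul_le_iff₀ hc, mul_comm] at hopt

theorem mul_ces_le_mul_inputCost {α θ w : ℝ} (hα : α ≠ 0) (hθ : θ ≠ 0) (hw : 0 < w)
    {p a : ι → ℝ} (hp : ∀ j, 0 < p j) (ha₀ : ∀ j, 0 ≤ a j)
    (ha : ∀ b : ι → ℝ, (∀ j, 0 ≤ b j) → b o + ∑ j ∈ S, b j = 1 →
      ces o S α θ (fun j => b j / p j) ≤ ces o S α θ (fun j => a j / p j))
    {z : ι → ℝ} (hz : ∀ j, 0 ≤ z j) :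
    w * ces o S α θ z ≤ ces o S α θ (fun j => a j * w / p j) * inputCost o S p z := by
  have hspend : (fun j => a j * w / p j) = fun j => w * (a j / p j) := by
    ext j
    ring
  rw [hspend, ces_mul_left hθ hw fun j => div_nonneg (ha₀ j) (hp j).le, mul_assoc]
  exact mul_le_mul_of_nonneg_left (le_mul_inputCost_of_optimal_shares
    (fun t ht x hx => ces_mul_left hθ ht hx) (fun x => ces_eq_zero hα) hp ha hz) hw.le

end Firm

theorem prod_rpow_le_prod_cobbDouglas {ι : Type*} (s : Finset ι) {β p y : ι → ℝ} {W : ℝ}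
    (hβ : ∀ i ∈ s, 0 < β i) (hβsum : ∑ i ∈ s, β i = 1) (hp : ∀ i ∈ s, 0 < p i) (hW : 0 < W)
    (hy : ∀ i ∈ s, 0 ≤ y i) (hbudget : ∑ i ∈ s, p i * y i ≤ W) :
    ∏ i ∈ s, y i ^ β i ≤ ∏ i ∈ s, (β i * W / p i) ^ β i := by
  set c : ι → ℝ := fun i => β i * W / p i
  have hc : ∀ i ∈ s, 0 < c i := fun i hi => div_pos (mul_pos (hβ i hi) hW) (hp i hi)
  have hsplit : ∀ i ∈ s, y i ^ β i = (y i / c i) ^ β i * c i ^ β i := fun i hi => by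
    rw [← Real.mul_rpow (div_nonneg (hy i hi) (hc i hi).le) (hc i hi).le,
      div_mul_cancel₀ _ (hc i hi).ne']
  have hterm : ∀ i ∈ s, β i * (y i / c i) = p i * y i / W := fun i hi => by
    have := (hβ i hi).ne'
    have := (hp i hi).ne'
    simp only [c]
    field_simp
  have hamgm : ∏ i ∈ s, (y i / c i) ^ β i ≤ 1 :=
    calc ∏ i ∈ s, (y i / c i) ^ β i ≤ ∑ i ∈ s, β i * (y i / c i) :=
          Real.geom_mean_le_arith_mean_weighted s β _ (fun i hi => (hβ i hi).le) hβsum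
            fun i hi => div_nonneg (hy i hi) (hc i hi).le
      _ = (∑ i ∈ s, p i * y i) / W := by rw [sum_congr rfl hterm, sum_div]
      _ ≤ 1 := (div_le_one hW).2 hbudget
  rw [prod_congr rfl hsplit, prod_mul_distrib]
  exact mul_le_of_le_one_left (prod_nonneg fun i hi => Real.rpow_nonneg (hc i hi).le _) hamgm

theorem stmt_0_general
    (m : ℕ)
    (α θ lam : ℝ)
    (hα : α ∈ Set.Ioo (0 : ℝ) 1) (hθ : θ ∈ Set.Ioo (0 : ℝ) 1)
    (hlam : lam ∈ Set.Ico (0 : ℝ) 1)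
    -- the production network: each firm has a nonempty set of (firm) suppliers
    (S : Fin (m + 1) → Finset (Fin (m + 1)))
    -- the household's Cobb-Douglas preference shares
    (β : Fin (m + 1) → ℝ) (hβpos : ∀ i : Fin (m + 1), i ≠ 0 → 0 < β i)
    (hβsum : ∑ i ∈ Finset.univ.erase 0, β i = 1)
    -- the firms' CES production functions
    (f : Fin (m + 1) → (Fin (m + 1) → ℝ) → ℝ)
    (hf : ∀ i : Fin (m + 1), ∀ x : Fin (m + 1) → ℝ,
      f i x = x 0 ^ α * (∑ j ∈ S i, x j ^ θ) ^ ((1 - α) / θ))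
    -- the steady state: wealths, outputs, prices and spending shares, all positive
    (w q p : Fin (m + 1) → ℝ) (sh : Fin (m + 1) → Fin (m + 1) → ℝ)
    (hw : ∀ i, 0 < w i) (hq : ∀ i, 0 < q i) (hp : ∀ i, 0 < p i)
    (hshnn : ∀ i j, 0 ≤ sh i j)
    (hshsum : ∀ j : Fin (m + 1), j ≠ 0 → sh 0 j + ∑ i ∈ S j, sh i j = 1)
    -- (a) each price equals its market-clearing value
    (ha : ∀ i : Fin (m + 1), i ≠ 0 → p i * q i = ∑ j, sh i j * w j)
    -- (b) output equals production from purchased inputs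
    (hb : ∀ i : Fin (m + 1), i ≠ 0 → q i = f i (fun j => sh j i * w i / p j))
    -- (c) expenses equal (1 - lam) times revenues
    (hc : ∀ i : Fin (m + 1), i ≠ 0 → w i = (1 - lam) * (p i * q i))
    -- (e) the household's spending shares are the Cobb-Douglas shares
    (he : ∀ i : Fin (m + 1), i ≠ 0 → sh i 0 = β i)
    -- (f) each firm's shares maximize output among nonnegative shares summing to 1
    (hopt : ∀ i : Fin (m + 1), i ≠ 0 → ∀ a : Fin (m + 1) → ℝ, (∀ j, 0 ≤ a j) →
      a 0 + ∑ j ∈ S i, a j = 1 →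
      f i (fun j => a j / p j) ≤ f i (fun j => sh j i / p j)) :
    -- (1) markets clear
    (∀ i : Fin (m + 1), i ≠ 0 → q i = ∑ j, sh i j * w j / p i) ∧
    -- (2) the household's bundle maximizes Cobb-Douglas utility in the budget set
    (∀ y : Fin (m + 1) → ℝ, (∀ i, 0 ≤ y i) →
      ∑ i ∈ Finset.univ.erase 0, p i * y i ≤ w 0 →
      ∏ i ∈ Finset.univ.erase 0, y i ^ β i ≤
        ∏ i ∈ Finset.univ.erase 0, (sh i 0 * w 0 / p i) ^ β i) ∧
    -- (3) each firm's input bundle minimizes cost given its output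
    (∀ i : Fin (m + 1), i ≠ 0 → ∀ z : Fin (m + 1) → ℝ, (∀ j, 0 ≤ z j) →
      q i ≤ f i z →
      p 0 * (sh 0 i * w i / p 0) + ∑ j ∈ S i, p j * (sh j i * w i / p j) ≤
        p 0 * z 0 + ∑ j ∈ S i, p j * z j) ∧
    -- (4) prices are a mark-up over unit production cost
    (∀ i : Fin (m + 1), i ≠ 0 →
      p i = (1 + lam / (1 - lam)) *
        (p 0 * (sh 0 i * w i / p 0) + ∑ j ∈ S i, p j * (sh j i * w i / p j)) / q i) ∧
    -- (5) when lam = 0, each firm's plan maximizes profit: competitive equilibrium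
    (lam = 0 → ∀ i : Fin (m + 1), i ≠ 0 → ∀ qq : ℝ, ∀ z : Fin (m + 1) → ℝ,
      (∀ j, 0 ≤ z j) → qq ≤ f i z →
      p i * qq - (p 0 * z 0 + ∑ j ∈ S i, p j * z j) ≤
        p i * q i -
          (p 0 * (sh 0 i * w i / p 0) + ∑ j ∈ S i, p j * (sh j i * w i / p j))) := by
  obtain rfl : f = fun i => ces 0 (S i) α θ := funext fun i => funext (hf i)
  have hunit : ∀ i ≠ 0, ∀ z : Fin (m + 1) → ℝ, (∀ j, 0 ≤ z j) →
      w i * ces 0 (S i) α θ z ≤ q i * inputCost 0 (S i) p z := fun i hi z hz =>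
    hb i hi ▸ mul_ces_le_mul_inputCost hα.1.ne' hθ.1.ne' (hw i) hp (fun j => hshnn j i)
      (hopt i hi) hz
  have hcost : ∀ i ≠ 0, inputCost 0 (S i) p (fun j => sh j i * w i / p j) = w i :=
    fun i hi => by rw [inputCost_div (fun j => (hp j).ne'), hshsum i hi, one_mul]
  refine ⟨fun i hi => ?_, fun y hy hbudget => ?_, fun i hi z hz hqz => ?_, fun i hi => ?_,
    fun hlam0 i hi qq z hz hqz => ?_⟩
  · rw [← Finset.sum_div, ← ha i hi, mul_div_cancel_left₀ _ (hp i).ne']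
  · refine (prod_rpow_le_prod_cobbDouglas _ (fun i hi => hβpos i (ne_of_mem_erase hi)) hβsum
      (fun i _ => hp i) (hw 0) (fun i _ => hy i) hbudget).trans_eq
      (prod_congr rfl fun i hi => ?_)
    rw [he i (ne_of_mem_erase hi)]
  · change inputCost 0 (S i) p (fun j => sh j i * w i / p j) ≤ inputCost 0 (S i) p z
    rw [hcost i hi]
    refine le_of_mul_le_mul_left ?_ (hq i)
    calc q i * w i = w i * q i := mul_comm _ _
      _ ≤ w i * ces 0 (S i) α θ z := mul_le_mul_of_nonneg_left hqz (hw i).le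
      _ ≤ q i * inputCost 0 (S i) p z := hunit i hi z hz
  · change p i = _ * inputCost 0 (S i) p (fun j => sh j i * w i / p j) / q i
    rw [hcost i hi, hc i hi, eq_div_iff (hq i).ne']
    field_simp [sub_ne_zero.2 hlam.2.ne']
    ring
  · change p i * qq - inputCost 0 (S i) p z ≤
      p i * q i - inputCost 0 (S i) p (fun j => sh j i * w i / p j)
    have hwi : w i = p i * q i := by rw [hc i hi, hlam0, sub_zero, one_mul]
    have hprofit : p i * ces 0 (S i) α θ z ≤ inputCost 0 (S i) p z := by
      have := hunit i hi z hz
      rw [hwi, mul_comm (p i), mul_assoc] at this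
      exact le_of_mul_le_mul_left this (hq i)
    rw [hcost i hi, hwi]
    linarith [mul_le_mul_of_nonneg_left hqz (hp i).le]

/-- A strictly positive steady state of the out-of-equilibrium dynamics on a fixed
production network is a general equilibrium with monopolistic mark-up `lam` of the
economy `E(A)`; moreover, for `lam = 0` it is a competitive equilibrium.

Agents are indexed by `Fin (m+1)`: agent `0` is the representative household and the
remaining `m` indices are the firms. `S i` is the supplier set of firm `i`, `β` are the
household's Cobb-Douglas exponents, `f i` is firm `i`'s CES production function,
`w, q, p` are wealths, outputs and prices, and `sh i j` is the share of agent `j`'s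
wealth spent on good `i` (so `sh i j * w j` is `j`'s nominal demand for good `i`, and
the commodity flow of good `i` to agent `j` is `x i j = sh i j * w j / p i`). -/
theorem stmt_0
    (m : ℕ) (hm : 0 < m)
    (α θ lam τp τw : ℝ)
    (hα : α ∈ Set.Ioo (0 : ℝ) 1) (hθ : θ ∈ Set.Ioo (0 : ℝ) 1)
    (hlam : lam ∈ Set.Ico (0 : ℝ) 1)
    (hτp : τp ∈ Set.Ioc (0 : ℝ) 1) (hτw : τw ∈ Set.Ioc (0 : ℝ) 1)
    -- the production network: each firm has a nonempty set of (firm) suppliers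
    (S : Fin (m + 1) → Finset (Fin (m + 1)))
    (hSne : ∀ i : Fin (m + 1), i ≠ 0 → (S i).Nonempty)
    (hSfirm : ∀ i j : Fin (m + 1), j ∈ S i → j ≠ 0)
    -- the household's Cobb-Douglas preference shares
    (β : Fin (m + 1) → ℝ) (hβpos : ∀ i : Fin (m + 1), i ≠ 0 → 0 < β i)
    (hβsum : ∑ i ∈ Finset.univ.erase 0, β i = 1)
    -- the firms' CES production functions
    (f : Fin (m + 1) → (Fin (m + 1) → ℝ) → ℝ)
    (hf : ∀ i : Fin (m + 1), ∀ x : Fin (m + 1) → ℝ,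
      f i x = x 0 ^ α * (∑ j ∈ S i, x j ^ θ) ^ ((1 - α) / θ))
    -- the steady state: wealths, outputs, prices and spending shares, all positive
    (w q p : Fin (m + 1) → ℝ) (sh : Fin (m + 1) → Fin (m + 1) → ℝ)
    (hw : ∀ i, 0 < w i) (hq : ∀ i, 0 < q i) (hp : ∀ i, 0 < p i)
    (hshnn : ∀ i j, 0 ≤ sh i j)
    (hsh00 : sh 0 0 = 0)
    (hshsupp : ∀ i j : Fin (m + 1), j ≠ 0 → sh i j ≠ 0 → i = 0 ∨ i ∈ S j)
    (hshsum : ∀ j : Fin (m + 1), j ≠ 0 → sh 0 j + ∑ i ∈ S j, sh i j = 1)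
    -- (a) each price equals its market-clearing value
    (ha : ∀ i : Fin (m + 1), i ≠ 0 → p i * q i = ∑ j, sh i j * w j)
    -- (b) output equals production from purchased inputs
    (hb : ∀ i : Fin (m + 1), i ≠ 0 → q i = f i (fun j => sh j i * w i / p j))
    -- (c) expenses equal (1 - lam) times revenues
    (hc : ∀ i : Fin (m + 1), i ≠ 0 → w i = (1 - lam) * (p i * q i))
    -- (d) household wealth (labor income plus dividends) and labor-market clearing
    (hd1 : w 0 = p 0 + lam * ∑ i ∈ Finset.univ.erase 0, p i * q i)
    (hd2 : p 0 = ∑ j, sh 0 j * w j)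
    -- (e) the household's spending shares are the Cobb-Douglas shares
    (he : ∀ i : Fin (m + 1), i ≠ 0 → sh i 0 = β i)
    -- (f) each firm's shares maximize output among nonnegative shares summing to 1
    (hopt : ∀ i : Fin (m + 1), i ≠ 0 → ∀ a : Fin (m + 1) → ℝ, (∀ j, 0 ≤ a j) →
      a 0 + ∑ j ∈ S i, a j = 1 →
      f i (fun j => a j / p j) ≤ f i (fun j => sh j i / p j)) :
    -- (1) markets clear
    (∀ i : Fin (m + 1), i ≠ 0 → q i = ∑ j, sh i j * w j / p i) ∧
    -- (2) the household's bundle maximizes Cobb-Douglas utility in the budget set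
    (∀ y : Fin (m + 1) → ℝ, (∀ i, 0 ≤ y i) →
      ∑ i ∈ Finset.univ.erase 0, p i * y i ≤ w 0 →
      ∏ i ∈ Finset.univ.erase 0, y i ^ β i ≤
        ∏ i ∈ Finset.univ.erase 0, (sh i 0 * w 0 / p i) ^ β i) ∧
    -- (3) each firm's input bundle minimizes cost given its output
    (∀ i : Fin (m + 1), i ≠ 0 → ∀ z : Fin (m + 1) → ℝ, (∀ j, 0 ≤ z j) →
      q i ≤ f i z →
      p 0 * (sh 0 i * w i / p 0) + ∑ j ∈ S i, p j * (sh j i * w i / p j) ≤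
        p 0 * z 0 + ∑ j ∈ S i, p j * z j) ∧
    -- (4) prices are a mark-up over unit production cost
    (∀ i : Fin (m + 1), i ≠ 0 →
      p i = (1 + lam / (1 - lam)) *
        (p 0 * (sh 0 i * w i / p 0) + ∑ j ∈ S i, p j * (sh j i * w i / p j)) / q i) ∧
    -- (5) when lam = 0, each firm's plan maximizes profit: competitive equilibrium
    (lam = 0 → ∀ i : Fin (m + 1), i ≠ 0 → ∀ qq : ℝ, ∀ z : Fin (m + 1) → ℝ,
      (∀ j, 0 ≤ z j) → qq ≤ f i z →
      p i * qq - (p 0 * z 0 + ∑ j ∈ S i, p j * z j) ≤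
        p i * q i -
          (p 0 * (sh 0 i * w i / p 0) + ∑ j ∈ S i, p j * (sh j i * w i / p j))) :=
  stmt_0_general m α θ lam hα hθ hlam S β hβpos hβsum f hf w q p sh hw hq hp hshnn hshsum ha hb hc
    he hopt
end

section
/- Let M be a finite set of firms, p : M → ℝ an assignment of prices, n : M → ℕ an assignment of numbers of suppliers, and a : M → M → Prop an adjacency relation (a h j meaning firm j is a supplier of firm h). Assume: (i) every firm buys only from the cheapest available suppliers, i.e. for all h, j, k ∈ M with k ≠ h, if a h j and ¬(a h k) then p j ≤ p k; and (ii) prices are strictly decreasing in the number of suppliers, i.e. for all i, j ∈ M, n i > n j implies p i < p j. Then the network is nested by supplier counts: for all i, j ∈ M with n j < n i, every firm h ∈ M with h ≠ i satisfying a h j also satisfies a h i. -/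
/-- At a steady state of the production-network dynamics, the network is nested by
supplier counts: a firm `h` linked to a firm `j` with fewer suppliers than `i` must
also be linked to `i`. -/
theorem stmt_1 {M : Type*} [Fintype M] (p : M → ℝ) (n : M → ℕ) (a : M → M → Prop)
    (h1 : ∀ h j k : M, k ≠ h → a h j → ¬ a h k → p j ≤ p k)
    (h2 : ∀ i j : M, n i > n j → p i < p j) :
    ∀ i j : M, n j < n i → ∀ h : M, h ≠ i → a h j → a h i := by
  intro i j hn h hne haj
  by_contra hnai
  exact absurd (h1 h j i (Ne.symm hne) haj hnai) (not_le.mpr (h2 i j hn))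
end

section
/- Let M be a finite set of firms, p : M → ℝ, n : M → ℕ, and a : M → M → Prop an adjacency relation with no self-links (¬(a h h) for all h). Assume (i) for all h, j, k ∈ M with k ≠ h, if a h j and ¬(a h k) then p j ≤ p k, and (ii) for all i, j ∈ M, n i > n j implies p i < p j. Then in-degrees are monotone in supplier counts: for all i, j ∈ M with n j < n i, the number of consumers of j other than i is at most the number of consumers of i, i.e. card {h ∈ M | h ≠ i ∧ a h j} ≤ card {h ∈ M | a h i}. -/
/-- At a steady state, in-degrees are monotone in supplier counts: if firm `i` has more
suppliers than firm `j`, then `j`'s consumers other than `i` are at most as numerous as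
`i`'s consumers. -/
theorem stmt_2 {M : Type*} [Fintype M] [DecidableEq M] (p : M → ℝ) (n : M → ℕ)
    (a : M → M → Prop) [DecidableRel a]
    (hself : ∀ h : M, ¬ a h h)
    (h1 : ∀ h j k : M, k ≠ h → a h j → ¬ a h k → p j ≤ p k)
    (h2 : ∀ i j : M, n i > n j → p i < p j) :
    ∀ i j : M, n j < n i →
      (Finset.univ.filter (fun h => h ≠ i ∧ a h j)).card ≤
        (Finset.univ.filter (fun h => a h i)).card := by
  intro i j hn
  apply Finset.card_le_card
  intro h hh
  simp only [Finset.mem_filter, Finset.mem_univ, true_and] at hh ⊢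
  obtain ⟨hhi, haj⟩ := hh
  by_contra hani
  exact absurd (h1 h j i (Ne.symm hhi) haj hani) (not_le.mpr (h2 i j hn))
end
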